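/- arXiv:2401.05574 — 2 statements merged into one kernel-verified Lean document; each statement's English description precedes it below -/
import Mathlib

section
/- Let k ≥ 2, n ≥ 1, d ≥ 1, α ∈ (0,1], ε₀ ∈ (0, 1/2), Δ > 0, and q ∈ (0,1) with 5/(2α·log(1/q)) < 1/2. Let θ₁, …, θ_k ∈ ℝ^d with min_{g≠h} ‖θ_g − θ_h‖ ≥ Δ, let z : {1,…,n} → {1,…,k} with n_g* := |{i : z_i = g}| ≥ nα for every g, and let Y_i = θ_{z_i} + w_i where w₁, …, w_n are independent ℝ^d-valued random vectors with P[‖w_i‖ ≥ ε₀Δ] ≤ q for each i. Then with probability at least 1 − k·exp(−nα/4), the following holds simultaneously: for every family θ̂₁, …, θ̂_k ∈ ℝ^d with max_h ‖θ̂_h − θ_h‖ ≤ (1/2 − ε₀)Δ and every labeling ẑ : {1,…,n} → {1,…,k} satisfying ‖Y_i − θ̂_{ẑ_i}‖ ≤ ‖Y_i − θ̂_a‖ for all i and all a ∈ {1,…,k}, one has for every g ∈ {1,…,k}, writing n_{gg} := |{i : z_i = g and ẑ_i = g}| and n_g := |{i : ẑ_i = g}|: n_{gg}/n_g* ≥ 1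 − 5/(2α·log(1/q)) and n_{gg}/n_g ≥ 1 − 5/(2α·log(1/q)). -/
/-!
A point `θ_g + w` whose noise has norm below `ε₀Δ` is strictly closer to the estimate of `θ_g`
than to any other estimate, so every mislabelled point carries large noise. By independence,
a given set of `m` points all carry large noise with probability at most `q ^ m`; a union bound
over the `n.choose m ≤ 2 ^ n` such sets, with `m > 5n / (2 log (1/q))`, shows that fewer than
`m` points carry large noise except with probability `e ^ (-3n/2) ≤ e ^ (-nα/4)`. On that event
at most `5n / (2 log (1/q)) = c · nα` points are mislabelled, where `c = 5 / (2α log (1/q))`;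
since every true cluster has at least `nα` points, both agreement ratios are at least `1 - c`.
-/

open MeasureTheory ProbabilityTheory Finset
open scoped ENNReal

section NearestCentroid

variable {E κ : Type*} [NormedAddCommGroup E] {θ θhat : κ → E} {Δ ε₀ : ℝ}

theorem eq_of_norm_add_sub_le_of_norm_lt (hsep : ∀ g h : κ, g ≠ h → Δ ≤ ‖θ g - θ h‖)
    (hhat : ∀ h : κ, ‖θhat h - θ h‖ ≤ (1 / 2 - ε₀) * Δ) {g b : κ} {v : E} (hv : ‖v‖ < ε₀ * Δ)
    (hb : ‖θ g + v - θhat b‖ ≤ ‖θ g + v - θhat g‖) : b = g := by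
  by_contra hbg
  have hnear : ‖θ g + v - θhat g‖ ≤ ‖v‖ + ‖θhat g - θ g‖ := by
    rw [show θ g + v - θhat g = v - (θhat g - θ g) by abel]
    exact norm_sub_le _ _
  have hfar : ‖θ g - θ b‖ ≤ ‖θ g + v - θhat b‖ + ‖v‖ + ‖θhat b - θ b‖ := by
    have hsplit : θ g - θ b = (θ g + v - θhat b) - v + (θhat b - θ b) := by abel
    rw [hsplit]
    exact (norm_add_le _ _).trans (by gcongr; exact norm_sub_le _ _)
  linarith [hsep g b (Ne.symm hbg), hhat g, hhat b]

theorem filter_ne_subset_filter_le_norm {ι : Type*} [Fintype ι] [DecidableEq κ]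
    (hsep : ∀ g h : κ, g ≠ h → Δ ≤ ‖θ g - θ h‖)
    (hhat : ∀ h : κ, ‖θhat h - θ h‖ ≤ (1 / 2 - ε₀) * Δ) (z zhat : ι → κ) (w : ι → E)
    (hnearest : ∀ i a, ‖θ (z i) + w i - θhat (zhat i)‖ ≤ ‖θ (z i) + w i - θhat a‖) :
    univ.filter (fun i => zhat i ≠ z i) ⊆ univ.filter (fun i => ε₀ * Δ ≤ ‖w i‖) := by
  intro i
  simp only [mem_filter, mem_univ, true_and]
  contrapose!
  exact fun hi => eq_of_norm_add_sub_le_of_norm_lt hsep hhat hi (hnearest i (z i))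

end NearestCentroid

theorem one_sub_le_agreement_ratios {ι κ : Type*} [Fintype ι] [DecidableEq κ] (z zhat : ι → κ)
    (g : κ) {N c : ℝ} (hN : 0 < N) (hsize : N ≤ #(univ.filter (fun i => z i = g)))
    (hmis : #(univ.filter (fun i => zhat i ≠ z i)) ≤ c * N) :
    1 - c ≤ (#(univ.filter (fun i => z i = g ∧ zhat i = g)) : ℝ)
        / #(univ.filter (fun i => z i = g)) ∧
      1 - c ≤ (#(univ.filter (fun i => z i = g ∧ zhat i = g)) : ℝ)
        / #(univ.filter (fun i => zhat i = g)) := by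
  classical
  set A := univ.filter (fun i => z i = g ∧ zhat i = g)
  set S := univ.filter (fun i => z i = g)
  set T := univ.filter (fun i => zhat i = g)
  set M := univ.filter (fun i => zhat i ≠ z i)
  rcases le_or_gt 1 c with hc | hc
  · exact ⟨(sub_nonpos.2 hc).trans (by positivity), (sub_nonpos.2 hc).trans (by positivity)⟩
  have hcover : ∀ P : Finset ι, (∀ i ∈ P, i ∈ A ∨ i ∈ M) → (#P : ℝ) ≤ #A + #M := fun P hP => by
    exact_mod_cast (card_le_card fun i hi => mem_union.2 (hP i hi)).trans (card_union_le A M)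
  have hSAM : (#S : ℝ) ≤ #A + #M := hcover S (by simp only [S, A, M, mem_filter, mem_univ, true_and]; grind)
  have hTAM : (#T : ℝ) ≤ #A + #M := hcover T (by simp only [T, A, M, mem_filter, mem_univ, true_and]; grind)
  have hAT : (#A : ℝ) ≤ #T := by
    exact_mod_cast card_le_card fun i => by
      simp only [A, T, mem_filter]; exact fun h => ⟨h.1, h.2.2⟩
  have hc0 : 0 ≤ c := nonneg_of_mul_nonneg_left (hmis.trans' (by positivity)) hN
  have hA : (1 - c) * N ≤ #A := by linarith
  have hSpos : 0 < (#S : ℝ) := hN.trans_le hsize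
  have hTpos : 0 < (#T : ℝ) := by nlinarith
  have h1c : 0 ≤ 1 - c := by linarith
  constructor
  · rw [le_div_iff₀ hSpos]
    nlinarith [mul_le_mul_of_nonneg_left hsize hc0]
  · rw [le_div_iff₀ hTpos]
    nlinarith [mul_le_mul_of_nonneg_left hTAM h1c, mul_le_mul_of_nonneg_left hmis h1c,
      mul_le_mul_of_nonneg_left hA hc0]

theorem ProbabilityTheory.iIndepFun.measure_le_card_filter_mem_le {Ω ι β : Type*}
    [MeasurableSpace Ω] [MeasurableSpace β] [Fintype ι] {μ : Measure Ω} {X : ι → Ω → β}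
    (hX : iIndepFun X μ) {B : Set β} [DecidablePred (· ∈ B)] (hB : MeasurableSet B) {r : ℝ≥0∞}
    (hr : ∀ i, μ (X i ⁻¹' B) ≤ r) (m : ℕ) :
    μ {ω | m ≤ #(univ.filter (fun i => X i ω ∈ B))} ≤ (Fintype.card ι).choose m * r ^ m := by
  have hcover : {ω | m ≤ #(univ.filter (fun i => X i ω ∈ B))}
      ⊆ ⋃ S ∈ univ.powersetCard m, ⋂ i ∈ S, X i ⁻¹' B := by
    intro ω hω
    obtain ⟨S, hS, hcard⟩ := exists_subset_card_eq hω
    simp only [Set.mem_iUnion, Set.mem_iInter, mem_powersetCard]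
    exact ⟨S, ⟨subset_univ S, hcard⟩, fun i hi => (mem_filter.1 (hS hi)).2⟩
  have hinter : ∀ S ∈ univ.powersetCard m, μ (⋂ i ∈ S, X i ⁻¹' B) ≤ r ^ m := by
    intro S hS
    rw [hX.meas_biInter (fun i _ => ⟨B, hB, rfl⟩), ← (mem_powersetCard.1 hS).2]
    exact prod_le_pow_card S _ r (fun i _ => hr i)
  calc _ ≤ μ (⋃ S ∈ univ.powersetCard m, ⋂ i ∈ S, X i ⁻¹' B) := measure_mono hcover
    _ ≤ ∑ S ∈ univ.powersetCard m, μ (⋂ i ∈ S, X i ⁻¹' B) := measure_biUnion_finset_le _ _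
    _ ≤ ∑ _S ∈ univ.powersetCard m, r ^ m := sum_le_sum hinter
    _ = (Fintype.card ι).choose m * r ^ m := by
      rw [sum_const, nsmul_eq_mul, card_powersetCard, card_univ]

theorem choose_mul_pow_le_exp {q : ℝ} (hq : 0 < q) (n m : ℕ) :
    n.choose m * q ^ m ≤ Real.exp (n + m * Real.log q) := by
  have h2e : (2 : ℝ) ≤ Real.exp 1 := by linarith [Real.add_one_le_exp (1 : ℝ)]
  rw [Real.exp_add, Real.exp_nat_mul, Real.exp_log hq]
  gcongr
  calc (n.choose m : ℝ) ≤ 2 ^ n := by exact_mod_cast Nat.choose_le_two_pow n m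
    _ ≤ Real.exp 1 ^ n := by gcongr
    _ = Real.exp n := by rw [← Real.exp_nat_mul, mul_one]

theorem choose_mul_pow_le_exp_neg {q α : ℝ} (hq : 0 < q) (hα : α ≤ 1) {n m : ℕ}
    (hm : 5 * n / 2 ≤ m * Real.log (1 / q)) : n.choose m * q ^ m ≤ Real.exp (-(n * α) / 4) := by
  refine (choose_mul_pow_le_exp hq n m).trans (Real.exp_le_exp.2 ?_)
  rw [one_div, Real.log_inv] at hm
  nlinarith [mul_le_mul_of_nonneg_left hα (Nat.cast_nonneg' n)]

theorem one_sub_toReal_le_toReal_of_compl_subset {Ω : Type*} [MeasurableSpace Ω] {μ : Measure Ω}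
    [IsProbabilityMeasure μ] {s t : Set Ω} (hst : sᶜ ⊆ t) : 1 - (μ t).toReal ≤ (μ s).toReal := by
  have hcover : 1 ≤ μ s + μ t := by
    simpa only [measure_univ] using (measure_univ_le_add_compl (μ := μ) s).trans (by gcongr)
  have := ENNReal.toReal_mono (by finiteness) hcover
  rw [ENNReal.toReal_add (by finiteness) (by finiteness), ENNReal.toReal_one] at this
  linarith

theorem nearest_centroid_labeling_accuracy_general
    (k n d : ℕ) (hk : 2 ≤ k) (hn : 1 ≤ n)
    (α ε₀ Δ q : ℝ) (hα : α ∈ Set.Ioc (0 : ℝ) 1)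
    (hq : q ∈ Set.Ioo (0 : ℝ) 1)
    (θ : Fin k → EuclideanSpace ℝ (Fin d))
    (hsep : ∀ g h : Fin k, g ≠ h → Δ ≤ ‖θ g - θ h‖)
    (z : Fin n → Fin k)
    (hsize : ∀ g : Fin k,
      (n : ℝ) * α ≤ ((Finset.univ.filter (fun i => z i = g)).card : ℝ))
    (Ω : Type*) [MeasureSpace Ω] [IsProbabilityMeasure (ℙ : Measure Ω)]
    (w : Fin n → Ω → EuclideanSpace ℝ (Fin d))
    (hindep : iIndepFun w ℙ)
    (htail : ∀ i, (ℙ {ω | ε₀ * Δ ≤ ‖w i ω‖}).toReal ≤ q) :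
    1 - k * Real.exp (-((n : ℝ) * α) / 4)
      ≤ (ℙ {ω | ∀ θhat : Fin k → EuclideanSpace ℝ (Fin d),
            (∀ h : Fin k, ‖θhat h - θ h‖ ≤ (1 / 2 - ε₀) * Δ) →
            ∀ zhat : Fin n → Fin k,
            (∀ i : Fin n, ∀ a : Fin k,
              ‖(θ (z i) + w i ω) - θhat (zhat i)‖ ≤ ‖(θ (z i) + w i ω) - θhat a‖) →
            ∀ g : Fin k,
              (1 - 5 / (2 * α * Real.log (1 / q))
                ≤ ((Finset.univ.filter (fun i => z i = g ∧ zhat i = g)).card : ℝ)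
                  / ((Finset.univ.filter (fun i => z i = g)).card : ℝ)) ∧
              (1 - 5 / (2 * α * Real.log (1 / q))
                ≤ ((Finset.univ.filter (fun i => z i = g ∧ zhat i = g)).card : ℝ)
                  / ((Finset.univ.filter (fun i => zhat i = g)).card : ℝ))}).toReal := by
  obtain ⟨hα0, hα1⟩ := hα
  obtain ⟨hq0, hq1⟩ := hq
  have hN : 0 < (n : ℝ) * α := mul_pos (by exact_mod_cast hn) hα0
  have hL : 0 < Real.log (1 / q) := Real.log_pos (by rw [lt_div_iff₀ hq0]; linarith)
  set c := 5 / (2 * α * Real.log (1 / q))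
  set m := ⌊c * (n * α)⌋₊ + 1
  have hm : 5 * n / 2 ≤ m * Real.log (1 / q) := by
    have hcm : c * (n * α) < m := by exact_mod_cast Nat.lt_floor_add_one (c * (n * α))
    have hcL : c * (n * α) * Real.log (1 / q) = 5 * n / 2 := by simp only [c]; field_simp
    exact hcL ▸ mul_le_mul_of_nonneg_right hcm.le hL.le
  set noisy : Ω → Finset (Fin n) := fun ω => univ.filter fun i => w i ω ∈ {x | ε₀ * Δ ≤ ‖x‖}
  have hprob : ℙ {ω | m ≤ #(noisy ω)} ≤ ENNReal.ofReal (n.choose m * q ^ m) := by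
    rw [ENNReal.ofReal_mul (by positivity), ENNReal.ofReal_pow hq0.le, ENNReal.ofReal_natCast]
    simpa only [Fintype.card_fin] using hindep.measure_le_card_filter_mem_le
      (measurableSet_le measurable_const measurable_norm)
      (fun i => (ENNReal.le_ofReal_iff_toReal_le (measure_ne_top _ _) hq0.le).2 (htail i)) m
  refine le_trans ?_ (one_sub_toReal_le_toReal_of_compl_subset (t := {ω | m ≤ #(noisy ω)}) ?_)
  · have hk1 : (1 : ℝ) ≤ k := Nat.one_le_cast.2 (by omega)
    linarith [ENNReal.toReal_le_of_le_ofReal (by positivity) hprob,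
      choose_mul_pow_le_exp_neg hq0 hα1 hm,
      le_mul_of_one_le_left (Real.exp_pos (-((n : ℝ) * α) / 4)).le hk1]
  · intro ω hω
    by_contra hmany
    refine hω fun θhat hhat zhat hnearest g => ?_
    have hfew : (#(noisy ω) : ℝ) ≤ c * (n * α) :=
      (Nat.le_floor_iff (by positivity)).1 (Nat.lt_succ_iff.1 (not_le.1 hmany))
    have hmis := card_le_card
      (filter_ne_subset_filter_le_norm hsep hhat z zhat (fun i => w i ω) hnearest)
    exact one_sub_le_agreement_ratios z zhat g hN (hsize g) ((Nat.cast_le.2 hmis).trans hfew)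

/-- Labeling-step accuracy (Lemma `Hs-Ls-bound-genr`(i) of the paper, stated
uniformly): with probability at least `1 − k·exp(−nα/4)`, for every family of
centroid estimates within `(1/2 − ε₀)Δ` of the true centroids and every
nearest-estimated-centroid labeling `ẑ` of the data `Y_i = θ_{z_i} + w_i`, each
cluster `g` satisfies `n_{gg}/n_g* ≥ 1 − 5/(2α log(1/q))` and
`n_{gg}/n_g ≥ 1 − 5/(2α log(1/q))`. -/
theorem nearest_centroid_labeling_accuracy
    (k n d : ℕ) (hk : 2 ≤ k) (hn : 1 ≤ n) (hd : 1 ≤ d)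
    (α ε₀ Δ q : ℝ) (hα : α ∈ Set.Ioc (0 : ℝ) 1)
    (hε₀ : ε₀ ∈ Set.Ioo (0 : ℝ) (1 / 2)) (hΔ : 0 < Δ)
    (hq : q ∈ Set.Ioo (0 : ℝ) 1)
    (hcond : 5 / (2 * α * Real.log (1 / q)) < 1 / 2)
    (θ : Fin k → EuclideanSpace ℝ (Fin d))
    (hsep : ∀ g h : Fin k, g ≠ h → Δ ≤ ‖θ g - θ h‖)
    (z : Fin n → Fin k)
    (hsize : ∀ g : Fin k,
      (n : ℝ) * α ≤ ((Finset.univ.filter (fun i => z i = g)).card : ℝ))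
    (Ω : Type*) [MeasureSpace Ω] [IsProbabilityMeasure (ℙ : Measure Ω)]
    (w : Fin n → Ω → EuclideanSpace ℝ (Fin d))
    (hmeas : ∀ i, Measurable (w i))
    (hindep : iIndepFun w ℙ)
    (htail : ∀ i, (ℙ {ω | ε₀ * Δ ≤ ‖w i ω‖}).toReal ≤ q) :
    1 - k * Real.exp (-((n : ℝ) * α) / 4)
      ≤ (ℙ {ω | ∀ θhat : Fin k → EuclideanSpace ℝ (Fin d),
            (∀ h : Fin k, ‖θhat h - θ h‖ ≤ (1 / 2 - ε₀) * Δ) →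
            ∀ zhat : Fin n → Fin k,
            (∀ i : Fin n, ∀ a : Fin k,
              ‖(θ (z i) + w i ω) - θhat (zhat i)‖ ≤ ‖(θ (z i) + w i ω) - θhat a‖) →
            ∀ g : Fin k,
              (1 - 5 / (2 * α * Real.log (1 / q))
                ≤ ((Finset.univ.filter (fun i => z i = g ∧ zhat i = g)).card : ℝ)
                  / ((Finset.univ.filter (fun i => z i = g)).card : ℝ)) ∧
              (1 - 5 / (2 * α * Real.log (1 / q))
                ≤ ((Finset.univ.filter (fun i => z i = g ∧ zhat i = g)).card : ℝ)
                  / ((Finset.univ.filter (fun i => zhat i = g)).card : ℝ))}).toReal :=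
  nearest_centroid_labeling_accuracy_general k n d hk hn α ε₀ Δ q hα hq θ hsep z hsize Ω w hindep
    htail
end

section
/- Let n ≥ 1, d ≥ 1, β ∈ (0,1), Δ > 0, σ > 0, and let G : [0,∞) → [0,1] be decreasing with 0 < G(Δ/(32σ)) < 1. Let z : {1,…,n} → {1,2} with clusters T_i* = {j : z_j = i} of sizes n_i*, let θ₁, θ₂ ∈ ℝ^d, and let Y_j = θ_{z_j} + w_j where w₁, …, w_n are independent ℝ^d-valued random vectors with P[‖w_j‖ > x] ≤ G(x/σ) for all x ≥ 0. Let D₁ ≥ 0 satisfy P[‖w_j‖ > D₁] ≤ exp(−5/(4β²)) for each j. Then with probability at least 1 − 4·exp(−min(n₁*, n₂*)/4), the following hold simultaneously for i = 1, 2: (i) |{j ∈ T_i* : ‖Y_j − θ_i‖ ≤ D₁}| ≥ n_i*(1 − β²), and (ii) |{j ∈ T_i* : ‖Y_j − θ_i‖ ≤ Δ/32}| ≥ n_i*·(1 − 5/(4·log(1/G(Δ/(32σ))))). -/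
/-!
For a cluster `T` and a radius `c`, the number of points of `T` farther than `c` from their
centroid is a sum of independent indicators, each of mean at most `exp (-t)`: take
`t = 5 / (4 β²)` for `c = D₁` and `t = log (1 / G (Δ / (32 σ)))` for `c = Δ / 32`. At this `t`
every indicator has moment generating function at most `2 ≤ e`, so by Chernoff the count reaches
`5 |T| / (4 t)` with probability at most `exp (|T| - 5 |T| / 4) = exp (-|T| / 4)`. A union bound
over the two clusters and the two radii gives the theorem.
-/

open MeasureTheory ProbabilityTheory Finset Real

section

variable {Ω ι : Type*} {mΩ : MeasurableSpace Ω} {μ : Measure Ω} [IsProbabilityMeasure μ]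

lemma mgf_indicator_one {E : Set Ω} (hE : MeasurableSet E) (t : ℝ) :
    mgf (E.indicator 1) μ t = 1 + (exp t - 1) * μ.real E := by
  have hexp : (fun ω => exp (t * E.indicator 1 ω))
      = fun ω => 1 + E.indicator (fun _ => exp t - 1) ω := by
    ext ω
    by_cases h : ω ∈ E <;> simp [h]
  rw [mgf, hexp, integral_add (integrable_const 1) ((integrable_const _).indicator hE),
    integral_indicator_const _ hE]
  simp [mul_comm]

lemma mgf_indicator_one_le_exp_one {E : Set Ω} (hE : MeasurableSet E) {t : ℝ}
    (hp : μ.real E ≤ exp (-t)) : mgf (E.indicator 1) μ t ≤ exp 1 := by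
  have hmass : (exp t - 1) * μ.real E ≤ 1 := calc
    (exp t - 1) * μ.real E ≤ exp t * exp (-t) := by
      gcongr
      linarith
    _ = 1 := by rw [← exp_add, add_neg_cancel, exp_zero]
  rw [mgf_indicator_one hE]
  linarith [add_one_le_exp 1]

theorem measureReal_le_card_filter_mem_le {α : Type*} [MeasurableSpace α] {X : ι → Ω → α}
    (hX : ∀ i, Measurable (X i)) (hind : iIndepFun X μ) {B : Set α} [DecidablePred (· ∈ B)]
    (hB : MeasurableSet B) {t : ℝ} (ht : 0 ≤ t) (hp : ∀ i, μ.real (X i ⁻¹' B) ≤ exp (-t)) (s : Finset ι) (a : ℝ) :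
    μ.real {ω | a ≤ #{i ∈ s | X i ω ∈ B}} ≤ exp (#s - t * a) := by
  set Y : ι → Ω → ℝ := fun i => B.indicator 1 ∘ X i
  have hY : ∀ i, Measurable (Y i) := fun i => (measurable_one.indicator hB).comp (hX i)
  have hYind : iIndepFun Y μ := hind.comp _ fun _ => measurable_one.indicator hB
  have hcount : ∀ ω, (#{i ∈ s | X i ω ∈ B} : ℝ) = (∑ i ∈ s, Y i) ω := by
    intro ω
    simp [Y, Set.indicator_apply]
  have hbound : ∀ ω, ‖exp (t * (∑ i ∈ s, Y i) ω)‖ ≤ exp (t * #s) := by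
    intro ω
    rw [norm_of_nonneg (exp_pos _).le, ← hcount, exp_le_exp]
    gcongr
    exact filter_subset _ _
  have hS : Measurable (∑ i ∈ s, Y i) := by fun_prop
  have hint : Integrable (fun ω => exp (t * (∑ i ∈ s, Y i) ω)) μ :=
    .of_bound (hS.const_mul t).exp.aestronglyMeasurable _ (.of_forall hbound)
  calc μ.real {ω | a ≤ #{i ∈ s | X i ω ∈ B}}
      = μ.real {ω | a ≤ (∑ i ∈ s, Y i) ω} := by simp_rw [hcount]
    _ ≤ exp (-t * a) * mgf (∑ i ∈ s, Y i) μ t := measure_ge_le_exp_mul_mgf a ht hint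
    _ = exp (-t * a) * ∏ i ∈ s, mgf (Y i) μ t := by rw [hYind.mgf_sum hY]
    _ ≤ exp (-t * a) * ∏ _i ∈ s, exp 1 := by
      gcongr with i
      · exact fun i _ => mgf_nonneg
      · exact mgf_indicator_one_le_exp_one (hX i hB) (hp i)
    _ = exp (#s - t * a) := by
      rw [prod_const, ← exp_nat_mul, ← exp_add]
      ring_nf

theorem measureReal_card_filter_notMem_lt_le {α : Type*} [MeasurableSpace α]
    {X : ι → Ω → α} (hX : ∀ i, Measurable (X i)) (hind : iIndepFun X μ) {B : Set α}
    [DecidablePred (· ∈ B)] (hB : MeasurableSet B) {t : ℝ} (ht : 0 < t)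
    (hp : ∀ i, μ.real (X i ⁻¹' B) ≤ exp (-t)) (s : Finset ι) :
    μ.real {ω | (#{i ∈ s | X i ω ∉ B} : ℝ) < #s * (1 - 5 / (4 * t))} ≤ exp (-#s / 4) := calc
  _ ≤ μ.real {ω | #s * (5 / (4 * t)) ≤ #{i ∈ s | X i ω ∈ B}} := by
    refine measureReal_mono fun ω hω => ?_
    have hsplit := card_filter_add_card_filter_not (s := s) (p := fun i => X i ω ∈ B)
    simp only [Set.mem_ofPred_eq] at hω ⊢
    rw [← hsplit, Nat.cast_add] at hω ⊢
    linarith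
  _ ≤ exp (#s - t * (#s * (5 / (4 * t)))) :=
    measureReal_le_card_filter_mem_le hX hind hB ht.le hp s _
  _ = exp (-#s / 4) := by
    congr 1
    field_simp
    ring

theorem measureReal_card_cluster_near_centroid_lt_le {κ E : Type*} [Fintype ι] [DecidableEq κ]
    [NormedAddCommGroup E] [MeasurableSpace E] [OpensMeasurableSpace E] {w : ι → Ω → E}
    (hw : ∀ j, Measurable (w j)) (hind : iIndepFun w μ) (z : ι → κ) (θ : κ → E) (i : κ)
    {c t : ℝ} (ht : 0 < t) (hp : ∀ j, μ.real {ω | c < ‖w j ω‖} ≤ exp (-t)) :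
    μ.real {ω | ¬ (#{j | z j = i} * (1 - 5 / (4 * t))
      ≤ #{j ∈ {j | z j = i} | ‖θ (z j) + w j ω - θ i‖ ≤ c})} ≤ exp (-#{j | z j = i} / 4) := by
  have hcount : ∀ ω, #{j ∈ {j | z j = i} | ‖θ (z j) + w j ω - θ i‖ ≤ c}
      = #{j ∈ {j | z j = i} | w j ω ∉ {v : E | c < ‖v‖}} := fun ω => by
    refine congrArg card (filter_congr fun j hj => ?_)
    rw [(mem_filter.1 hj).2, add_sub_cancel_left, Set.mem_ofPred_eq, not_lt]
  simp_rw [hcount, not_le]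
  exact measureReal_card_filter_notMem_lt_le hw hind
    (measurableSet_lt measurable_const measurable_norm) ht hp _

lemma one_sub_sum_le_measureReal_forall_and [Fintype ι] (P Q : ι → Ω → Prop) :
    1 - ∑ i, (μ.real {ω | ¬ P i ω} + μ.real {ω | ¬ Q i ω}) ≤ μ.real {ω | ∀ i, P i ω ∧ Q i ω} := by
  have hcompl : {ω | ∀ i, P i ω ∧ Q i ω}ᶜ = ⋃ i, ({ω | ¬ P i ω} ∪ {ω | ¬ Q i ω}) := by
    ext ω
    simp only [Set.mem_compl_iff, Set.mem_ofPred_eq, not_forall, not_and_or, Set.mem_iUnion,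
      Set.mem_union]
  have hsplit := measureReal_union_le (μ := μ) {ω | ∀ i, P i ω ∧ Q i ω} {ω | ∀ i, P i ω ∧ Q i ω}ᶜ
  rw [Set.union_compl_self, probReal_univ, hcompl] at hsplit
  have hunion := (measureReal_iUnion_fintype_le (μ := μ) _).trans
    (sum_le_sum fun i _ => measureReal_union_le (μ := μ) {ω | ¬ P i ω} {ω | ¬ Q i ω})
  linarith

end

theorem two_cluster_initialization_concentration_general
    (n d : ℕ)
    (β Δ σ : ℝ) (hβ : β ∈ Set.Ioo (0 : ℝ) 1) (hΔ : 0 < Δ)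
    (G : ℝ → ℝ)
    (hGpos : 0 < G (Δ / (32 * σ))) (hGlt : G (Δ / (32 * σ)) < 1)
    (z : Fin n → Fin 2) (θ : Fin 2 → EuclideanSpace ℝ (Fin d))
    (Ω : Type*) [MeasureSpace Ω] [IsProbabilityMeasure (ℙ : Measure Ω)]
    (w : Fin n → Ω → EuclideanSpace ℝ (Fin d))
    (hmeas : ∀ j, Measurable (w j))
    (hindep : iIndepFun w ℙ)
    (htail : ∀ j, ∀ x : ℝ, 0 ≤ x → (ℙ {ω | x < ‖w j ω‖}).toReal ≤ G (x / σ))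
    (D₁ : ℝ)
    (hD₁tail : ∀ j, (ℙ {ω | D₁ < ‖w j ω‖}).toReal ≤ Real.exp (-(5 / (4 * β ^ 2)))) :
    1 - 4 * Real.exp (-((min ((Finset.univ.filter (fun j => z j = 0)).card)
            ((Finset.univ.filter (fun j => z j = 1)).card) : ℕ) : ℝ) / 4)
      ≤ (ℙ {ω | ∀ i : Fin 2,
            (((Finset.univ.filter (fun j => z j = i)).card : ℝ) * (1 - β ^ 2)
              ≤ (((Finset.univ.filter (fun j => z j = i)).filter
                  (fun j => ‖(θ (z j) + w j ω) - θ i‖ ≤ D₁)).card : ℝ)) ∧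
            (((Finset.univ.filter (fun j => z j = i)).card : ℝ)
                * (1 - 5 / (4 * Real.log (1 / G (Δ / (32 * σ)))))
              ≤ (((Finset.univ.filter (fun j => z j = i)).filter
                  (fun j => ‖(θ (z j) + w j ω) - θ i‖ ≤ Δ / 32)).card : ℝ))}).toReal := by
  set μ : Measure Ω := ℙ
  set m := min #{j | z j = 0} #{j | z j = 1}
  have hm : ∀ i, exp (-#{j | z j = i} / 4) ≤ exp (-(m : ℝ) / 4) := by
    intro i
    have hmi : m ≤ #{j | z j = i} := by fin_cases i <;> simp [m]
    gcongr
  have hnear : ∀ i, μ.real {ω | ¬ (#{j | z j = i} * (1 - β ^ 2)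
      ≤ #{j ∈ {j | z j = i} | ‖θ (z j) + w j ω - θ i‖ ≤ D₁})} ≤ exp (-(m : ℝ) / 4) := by
    intro i
    have h := measureReal_card_cluster_near_centroid_lt_le hmeas hindep z θ i
      (by have := hβ.1; positivity) hD₁tail
    rw [show 5 / (4 * (5 / (4 * β ^ 2))) = β ^ 2 by field_simp [hβ.1.ne']] at h
    exact h.trans (hm i)
  have hclose : ∀ i, μ.real {ω | ¬ (#{j | z j = i} * (1 - 5 / (4 * log (1 / G (Δ / (32 * σ)))))
      ≤ #{j ∈ {j | z j = i} | ‖θ (z j) + w j ω - θ i‖ ≤ Δ / 32})} ≤ exp (-(m : ℝ) / 4) := by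
    intro i
    refine (measureReal_card_cluster_near_centroid_lt_le hmeas hindep z θ i
      (log_pos (one_lt_one_div hGpos hGlt)) fun j => ?_).trans (hm i)
    rw [one_div, log_inv, neg_neg, exp_log hGpos, ← div_div]
    exact htail j _ (by positivity)
  refine le_trans ?_ (one_sub_sum_le_measureReal_forall_and _ _)
  rw [Fin.sum_univ_two]
  linarith [hnear 0, hnear 1, hclose 0, hclose 1]

/-- Concentration event for the two-cluster initialization analysis (Lemma
`E-conc-init-2` of the paper): with probability at least
`1 − 4·exp(−min(n₁*, n₂*)/4)`, for each cluster `i = 1, 2`, at least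
`n_i*(1 − β²)` points of the cluster lie within distance `D₁` of `θ_i`, and at
least `n_i*(1 − 5/(4 log(1/G(Δ/(32σ)))))` of them lie within `Δ/32` of `θ_i`. -/
theorem two_cluster_initialization_concentration
    (n d : ℕ) (hn : 1 ≤ n) (hd : 1 ≤ d)
    (β Δ σ : ℝ) (hβ : β ∈ Set.Ioo (0 : ℝ) 1) (hΔ : 0 < Δ) (hσ : 0 < σ)
    (G : ℝ → ℝ) (hGanti : AntitoneOn G (Set.Ici 0))
    (hGrange : ∀ x : ℝ, 0 ≤ x → G x ∈ Set.Icc (0 : ℝ) 1)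
    (hGpos : 0 < G (Δ / (32 * σ))) (hGlt : G (Δ / (32 * σ)) < 1)
    (z : Fin n → Fin 2) (θ : Fin 2 → EuclideanSpace ℝ (Fin d))
    (Ω : Type*) [MeasureSpace Ω] [IsProbabilityMeasure (ℙ : Measure Ω)]
    (w : Fin n → Ω → EuclideanSpace ℝ (Fin d))
    (hmeas : ∀ j, Measurable (w j))
    (hindep : iIndepFun w ℙ)
    (htail : ∀ j, ∀ x : ℝ, 0 ≤ x → (ℙ {ω | x < ‖w j ω‖}).toReal ≤ G (x / σ))
    (D₁ : ℝ) (hD₁ : 0 ≤ D₁)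
    (hD₁tail : ∀ j, (ℙ {ω | D₁ < ‖w j ω‖}).toReal ≤ Real.exp (-(5 / (4 * β ^ 2)))) :
    1 - 4 * Real.exp (-((min ((Finset.univ.filter (fun j => z j = 0)).card)
            ((Finset.univ.filter (fun j => z j = 1)).card) : ℕ) : ℝ) / 4)
      ≤ (ℙ {ω | ∀ i : Fin 2,
            (((Finset.univ.filter (fun j => z j = i)).card : ℝ) * (1 - β ^ 2)
              ≤ (((Finset.univ.filter (fun j => z j = i)).filter
                  (fun j => ‖(θ (z j) + w j ω) - θ i‖ ≤ D₁)).card : ℝ)) ∧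
            (((Finset.univ.filter (fun j => z j = i)).card : ℝ)
                * (1 - 5 / (4 * Real.log (1 / G (Δ / (32 * σ)))))
              ≤ (((Finset.univ.filter (fun j => z j = i)).filter
                  (fun j => ‖(θ (z j) + w j ω) - θ i‖ ≤ Δ / 32)).card : ℝ))}).toReal :=
  two_cluster_initialization_concentration_general n d β Δ σ hβ hΔ G hGpos hGlt z θ Ω w hmeas hindep
    htail D₁ hD₁tail
end
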